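/- Let H be a symmetric real p×p matrix, g ∈ ℝ^p, σ > 0, and λ ≥ 0. Suppose H + λI is positive semidefinite, s ∈ ℝ^p satisfies (H + λI)s = −g, u ∈ ℝ^p satisfies H u = −λ u, and α ∈ ℝ is such that ‖s + α u‖ = λ/σ. Then d = s + α u satisfies (H + σ‖d‖·I) d = −g with H + σ‖d‖·I positive semidefinite, and consequently d is a global minimizer of m(d') = ⟨g, d'⟩ + (1/2)⟨d', H d'⟩ + (σ/3)‖d'‖³ over ℝ^p. -/

import Mathlib

open scoped RealInnerProductSpace

/-! With `λ = σ‖d‖` the model splits as `m(x) = q(x) + φ(‖x‖)`, where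
`q(x) = ⟨g, x⟩ + ½⟨x, (H + λI) x⟩` and `φ(t) = (σ/3) t³ - (λ/2) t²`. Since `(H + λI) d = -g` and
`H + λI ⪰ 0`, the quadratic `q` is minimized at `d`, and `φ` is minimized over `t ≥ 0` at
`t = ‖d‖`; so `d` minimizes both parts at once. In the hard case `d = s + αu` solves the linear
system because `u` lies in the kernel of `H + λI`. -/

section CubicModel

variable {E : Type*} [NormedAddCommGroup E] [InnerProductSpace ℝ E]

noncomputable def cubicModel (g : E) (T : E →ₗ[ℝ] E) (σ : ℝ) (x : E) : ℝ :=
  ⟪g, x⟫ + (1 / 2) * ⟪x, T x⟫ + (σ / 3) * ‖x‖ ^ 3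

theorem LinearMap.IsSymmetric.inner_add_half_inner_apply_eq {A : E →ₗ[ℝ] E}
    (hA : A.IsSymmetric) {g d : E} (hd : A d = -g) (x : E) :
    ⟪g, x⟫ + (1 / 2) * ⟪x, A x⟫
      = ⟪g, d⟫ + (1 / 2) * ⟪d, A d⟫ + (1 / 2) * ⟪x - d, A (x - d)⟫ := by
  have hx : ⟪x, A d⟫ = ⟪d, A x⟫ := by rw [← hA, real_inner_comm]
  rw [← neg_neg g, ← hd, map_sub, inner_neg_left, inner_neg_left, inner_sub_left,
    inner_sub_right, inner_sub_right, hx, hA d x, hA d d]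
  ring

theorem three_mul_mul_sq_le {a b : ℝ} (ha : 0 ≤ a) (hb : 0 ≤ b) :
    3 * a * b ^ 2 ≤ a ^ 3 + 2 * b ^ 3 := by
  nlinarith [mul_nonneg (sq_nonneg (a - b)) (by positivity : 0 ≤ a + 2 * b)]

theorem cubicModel_le_of_isPositive {T : E →ₗ[ℝ] E} {g d : E} {σ lam : ℝ} (hσ : 0 ≤ σ)
    (hlam : σ * ‖d‖ = lam) (hpos : (T + lam • LinearMap.id : E →ₗ[ℝ] E).IsPositive)
    (hd : (T + lam • LinearMap.id : E →ₗ[ℝ] E) d = -g) (x : E) :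
    cubicModel g T σ d ≤ cubicModel g T σ x := by
  have hshift (y : E) :
      ⟪y, (T + lam • LinearMap.id : E →ₗ[ℝ] E) y⟫ = ⟪y, T y⟫ + lam * ‖y‖ ^ 2 := by
    rw [LinearMap.add_apply, inner_add_right, LinearMap.smul_apply, LinearMap.id_apply,
      real_inner_smul_right, real_inner_self_eq_norm_sq]
  have hquad := hpos.isSymmetric.inner_add_half_inner_apply_eq hd x
  have hgap : 0 ≤ ⟪x - d, (T + lam • LinearMap.id : E →ₗ[ℝ] E) (x - d)⟫ :=
    hpos.re_inner_nonneg_right (x - d)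
  have hcube := mul_le_mul_of_nonneg_left (three_mul_mul_sq_le (norm_nonneg d) (norm_nonneg x)) hσ
  rw [hshift, hshift] at hquad
  subst hlam
  unfold cubicModel
  linarith

end CubicModel

theorem Matrix.toEuclideanLin_add_smul_one {n : Type*} [Fintype n] [DecidableEq n]
    (H : Matrix n n ℝ) (c : ℝ) :
    Matrix.toEuclideanLin (H + c • (1 : Matrix n n ℝ))
      = Matrix.toEuclideanLin H + c • LinearMap.id := by
  rw [map_add, map_smul, Matrix.toLpLin_one]

theorem cubic_subproblem_hard_case_general
    (p : ℕ)
    (H : Matrix (Fin p) (Fin p) ℝ)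
    (g : EuclideanSpace ℝ (Fin p)) (σ lam : ℝ) (hσ : 0 < σ)
    (hpsd : (H + lam • (1 : Matrix (Fin p) (Fin p) ℝ)).PosSemidef)
    (s u : EuclideanSpace ℝ (Fin p))
    (hs : Matrix.toEuclideanLin (H + lam • (1 : Matrix (Fin p) (Fin p) ℝ)) s = -g)
    (hu : Matrix.toEuclideanLin H u = -lam • u)
    (α : ℝ) (hα : ‖s + α • u‖ = lam / σ) :
    Matrix.toEuclideanLin
        (H + (σ * ‖s + α • u‖) • (1 : Matrix (Fin p) (Fin p) ℝ)) (s + α • u) = -g ∧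
      (H + (σ * ‖s + α • u‖) • (1 : Matrix (Fin p) (Fin p) ℝ)).PosSemidef ∧
      ∀ d : EuclideanSpace ℝ (Fin p),
        ⟪g, s + α • u⟫ + (1 / 2) * ⟪s + α • u, Matrix.toEuclideanLin H (s + α • u)⟫
            + (σ / 3) * ‖s + α • u‖ ^ 3
          ≤ ⟪g, d⟫ + (1 / 2) * ⟪d, Matrix.toEuclideanLin H d⟫ + (σ / 3) * ‖d‖ ^ 3 := by
  have hlam : σ * ‖s + α • u‖ = lam := by rw [hα]; field_simp
  have hker : Matrix.toEuclideanLin (H + lam • (1 : Matrix (Fin p) (Fin p) ℝ)) u = 0 := by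
    rw [Matrix.toEuclideanLin_add_smul_one, LinearMap.add_apply, hu]
    simp
  have hsol :
      Matrix.toEuclideanLin (H + lam • (1 : Matrix (Fin p) (Fin p) ℝ)) (s + α • u) = -g := by
    rw [map_add, map_smul, hs, hker, smul_zero, add_zero]
  rw [hlam]
  refine ⟨hsol, hpsd, cubicModel_le_of_isPositive hσ.le hlam ?_ ?_⟩
  · rw [← Matrix.toEuclideanLin_add_smul_one H lam]
    exact Matrix.isPositive_toEuclideanLin_iff.mpr hpsd
  · rwa [← Matrix.toEuclideanLin_add_smul_one H lam]

/-- Hard case resolution: if `H + λI ⪰ 0`, `(H + λI)s = -g`, `Hu = -λu` and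
`‖s + αu‖ = λ/σ`, then `d = s + αu` satisfies the global optimality conditions
`(H + σ‖d‖ I) d = -g`, `H + σ‖d‖ I ⪰ 0`, and is a global minimizer of the
cubic-regularized model `m(d') = ⟨g, d'⟩ + (1/2)⟨d', H d'⟩ + (σ/3)‖d'‖³`. -/
theorem cubic_subproblem_hard_case
    (p : ℕ) (hp : 1 ≤ p)
    (H : Matrix (Fin p) (Fin p) ℝ) (hH : H.IsSymm)
    (g : EuclideanSpace ℝ (Fin p)) (σ lam : ℝ) (hσ : 0 < σ) (hlam : 0 ≤ lam)
    (hpsd : (H + lam • (1 : Matrix (Fin p) (Fin p) ℝ)).PosSemidef)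
    (s u : EuclideanSpace ℝ (Fin p))
    (hs : Matrix.toEuclideanLin (H + lam • (1 : Matrix (Fin p) (Fin p) ℝ)) s = -g)
    (hu : Matrix.toEuclideanLin H u = -lam • u)
    (α : ℝ) (hα : ‖s + α • u‖ = lam / σ) :
    Matrix.toEuclideanLin
        (H + (σ * ‖s + α • u‖) • (1 : Matrix (Fin p) (Fin p) ℝ)) (s + α • u) = -g ∧
      (H + (σ * ‖s + α • u‖) • (1 : Matrix (Fin p) (Fin p) ℝ)).PosSemidef ∧
      ∀ d : EuclideanSpace ℝ (Fin p),
        ⟪g, s + α • u⟫ + (1 / 2) * ⟪s + α • u, Matrix.toEuclideanLin H (s + α • u)⟫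
            + (σ / 3) * ‖s + α • u‖ ^ 3
          ≤ ⟪g, d⟫ + (1 / 2) * ⟪d, Matrix.toEuclideanLin H d⟫ + (σ / 3) * ‖d‖ ^ 3 :=
  cubic_subproblem_hard_case_general p H g σ lam hσ hpsd s u hs hu α hα
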